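/- arXiv:2307.01339 — 2 statements merged into one kernel-verified Lean document; each statement's English description precedes it below -/
import Mathlib

section
/- Let K(r, θ) = (720m²/(r²+a²cos²θ)⁹)·(a⁴cos⁴θ − 4a³cos³θ·r − 6a²cos²θ·r² + 4a·cosθ·r³ + r⁴)·(a⁴cos⁴θ + 4a³cos³θ·r − 6a²cos²θ·r² − 4a·cosθ·r³ + r⁴)·(a²cos²θ − 2mr + r²) be the Karlhede invariant ∇_μR_{αβγδ}∇^μR^{αβγδ} of the Kerr black hole. Then: (i) whenever r² + a²cos²θ > 0 and a²cos²θ − 2mr + r² = 0, one has K(r, θ) = 0; in particular, if m² ≥ a²cos²θ then K vanishes at the infinite-redshift radii r = m ± √(m² − a²cos²θ). (ii) If 0 < a < m, then at the event horizon radius r₊ = m + √(m² − a²) one has K(r₊, π/2) = −720m²a²/r₊¹⁰ < 0, so the Karlhede invariant does not vanish on the Kerr event horizon. -/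
/-! The ergosurface polynomial `a²cos²θ − 2mr + r²` is a factor of `kerrKarlhede`, which gives (i).
On the equator `cos θ = 0` the invariant reduces to `720 m² (r² − 2mr) / r¹⁰`, and on the horizon
`r² − 2mr = −a²`, which gives (ii). -/

/-- The Karlhede invariant `∇_μ R_{αβγδ} ∇^μ R^{αβγδ}` of the Kerr black hole,
in Boyer–Lindquist coordinates `(r, θ)`. -/
noncomputable def kerrKarlhede (a m r θ : ℝ) : ℝ :=
  720 * m ^ 2 / (r ^ 2 + a ^ 2 * Real.cos θ ^ 2) ^ 9 *
    (a ^ 4 * Real.cos θ ^ 4 - 4 * a ^ 3 * Real.cos θ ^ 3 * r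
      - 6 * a ^ 2 * Real.cos θ ^ 2 * r ^ 2 + 4 * a * Real.cos θ * r ^ 3 + r ^ 4) *
    (a ^ 4 * Real.cos θ ^ 4 + 4 * a ^ 3 * Real.cos θ ^ 3 * r
      - 6 * a ^ 2 * Real.cos θ ^ 2 * r ^ 2 - 4 * a * Real.cos θ * r ^ 3 + r ^ 4) *
    (a ^ 2 * Real.cos θ ^ 2 - 2 * m * r + r ^ 2)

/-- The roots `m ± s` of `r² − 2mr + c`: the infinite-redshift radii for `c = a²cos²θ`,
the horizon radii for `c = a²`. -/
theorem sub_two_mul_mul_add_sq_eq_zero_of_sq_eq {c m s : ℝ} (h : s ^ 2 = m ^ 2 - c) :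
    c - 2 * m * (m + s) + (m + s) ^ 2 = 0 := by
  linear_combination h

theorem kerrKarlhede_eq_zero_of_ergosurface {a m r θ : ℝ}
    (h : a ^ 2 * Real.cos θ ^ 2 - 2 * m * r + r ^ 2 = 0) : kerrKarlhede a m r θ = 0 := by
  rw [kerrKarlhede, h, mul_zero]

theorem kerrKarlhede_pi_div_two (a m : ℝ) {r : ℝ} (hr : r ≠ 0) :
    kerrKarlhede a m r (Real.pi / 2) = 720 * m ^ 2 * (r ^ 2 - 2 * m * r) / r ^ 10 := by
  simp only [kerrKarlhede, Real.cos_pi_div_two]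
  field_simp
  ring

/-- (i) The Karlhede invariant of the Kerr black hole vanishes on the
infinite-redshift surfaces `a²cos²θ − 2mr + r² = 0`, in particular at the radii
`r = m ± √(m² − a²cos²θ)` whenever `m² ≥ a²cos²θ`; (ii) for `0 < a < m` it equals
`−720 m² a² / r₊¹⁰ < 0` at the event horizon `r₊ = m + √(m² − a²)` (at `θ = π/2`),
hence does not vanish on the Kerr event horizon. -/
theorem kerrKarlhede_ergosurface_and_horizon (a m : ℝ) :
    (∀ r θ : ℝ, 0 < r ^ 2 + a ^ 2 * Real.cos θ ^ 2 →
      a ^ 2 * Real.cos θ ^ 2 - 2 * m * r + r ^ 2 = 0 → kerrKarlhede a m r θ = 0) ∧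
    (∀ θ : ℝ, m ^ 2 ≥ a ^ 2 * Real.cos θ ^ 2 →
      kerrKarlhede a m (m + Real.sqrt (m ^ 2 - a ^ 2 * Real.cos θ ^ 2)) θ = 0 ∧
      kerrKarlhede a m (m - Real.sqrt (m ^ 2 - a ^ 2 * Real.cos θ ^ 2)) θ = 0) ∧
    (0 < a → a < m →
      kerrKarlhede a m (m + Real.sqrt (m ^ 2 - a ^ 2)) (Real.pi / 2) =
        -(720 * m ^ 2 * a ^ 2) / (m + Real.sqrt (m ^ 2 - a ^ 2)) ^ 10 ∧
      kerrKarlhede a m (m + Real.sqrt (m ^ 2 - a ^ 2)) (Real.pi / 2) < 0) := by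
  refine ⟨fun r θ _ h => kerrKarlhede_eq_zero_of_ergosurface h, fun θ hθ => ?_, fun ha ham => ?_⟩
  · have hs := Real.sq_sqrt (sub_nonneg.2 hθ)
    refine ⟨kerrKarlhede_eq_zero_of_ergosurface (sub_two_mul_mul_add_sq_eq_zero_of_sq_eq hs),
      kerrKarlhede_eq_zero_of_ergosurface ?_⟩
    rw [sub_eq_add_neg m]
    exact sub_two_mul_mul_add_sq_eq_zero_of_sq_eq (by rw [neg_sq, hs])
  set rH := m + Real.sqrt (m ^ 2 - a ^ 2)
  have hm : 0 < m := ha.trans ham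
  have hrH : 0 < rH := add_pos_of_pos_of_nonneg hm (Real.sqrt_nonneg _)
  have horizon : a ^ 2 - 2 * m * rH + rH ^ 2 = 0 :=
    sub_two_mul_mul_add_sq_eq_zero_of_sq_eq (Real.sq_sqrt (by nlinarith))
  have value : kerrKarlhede a m rH (Real.pi / 2) = -(720 * m ^ 2 * a ^ 2) / rH ^ 10 := by
    rw [kerrKarlhede_pi_div_two a m hrH.ne']
    congr 1
    linear_combination 720 * m ^ 2 * horizon
  refine ⟨value, value ▸ div_neg_of_neg_of_pos ?_ (by positivity)⟩
  exact neg_neg_of_pos (by positivity)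
end

section
/- For every a > 0, the sextic polynomial p(r) = r⁶ − 21a²r⁴ + 35a⁴r² − 7a⁶ has exactly three positive real roots r₁ < r₂ < r₃, and they satisfy r₁ ∈ (0.4815·a, 0.4816·a), r₂ ∈ (1.2539·a, 1.2540·a) and r₃ ∈ (4.3812·a, 4.3813·a). -/
/-!
Substituting `r = a x` gives `p(a x) = a⁶ q(x)` with `q(x) = x⁶ − 21x⁴ + 35x² − 7`, a cubic in `x²`.
Sign changes of `q` on the three given intervals produce three positive roots by the intermediate
value theorem; their squares are three distinct roots of the cubic, which therefore has no other root.
(The positive roots of `q` are `cot(kπ/14)`, `k = 1, 3, 5`: for `x = cot θ`, `q(x) sin⁶θ` is the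
denominator of `tan 7θ` as a rational function of `tan θ`.)
-/

/-- The sextic `p(r) = r⁶ − 21a²r⁴ + 35a⁴r² − 7a⁶` (equal to `−7` times the factor
appearing squared in the on-axis value of the gradient invariant `I₅` of the
Kerr–(anti-)de Sitter black hole). -/
noncomputable def axisSextic (a r : ℝ) : ℝ :=
  r ^ 6 - 21 * a ^ 2 * r ^ 4 + 35 * a ^ 4 * r ^ 2 - 7 * a ^ 6

open Set

theorem exists_mem_Ioo_eq_zero_of_mul_neg {α : Type*} [ConditionallyCompleteLinearOrder α]
    [TopologicalSpace α] [OrderTopology α] [DenselyOrdered α] {f : α → ℝ} {u v : α}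
    (huv : u ≤ v) (hf : ContinuousOn f (Icc u v)) (h : f u * f v < 0) :
    ∃ s ∈ Ioo u v, f s = 0 := by
  rcases mul_neg_iff.1 h with ⟨hu, hv⟩ | ⟨hu, hv⟩
  · exact intermediate_value_Ioo' huv hf ⟨hv, hu⟩
  · exact intermediate_value_Ioo huv hf ⟨hu, hv⟩

/-- The third divided difference of a monic cubic is `1`, so the Vandermonde product of any four
of its roots vanishes. -/
theorem eq_or_eq_or_eq_of_cubic_eq_zero {R : Type*} [CommRing R] [NoZeroDivisors R]
    {b c d t₁ t₂ t₃ t : R} (h₁₂ : t₁ ≠ t₂) (h₁₃ : t₁ ≠ t₃) (h₂₃ : t₂ ≠ t₃)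
    (h₁ : t₁ ^ 3 + b * t₁ ^ 2 + c * t₁ + d = 0) (h₂ : t₂ ^ 3 + b * t₂ ^ 2 + c * t₂ + d = 0)
    (h₃ : t₃ ^ 3 + b * t₃ ^ 2 + c * t₃ + d = 0) (h : t ^ 3 + b * t ^ 2 + c * t + d = 0) :
    t = t₁ ∨ t = t₂ ∨ t = t₃ := by
  have hV : (t - t₁) * (t - t₂) * (t - t₃) * ((t₁ - t₂) * (t₁ - t₃) * (t₂ - t₃)) = 0 := by
    linear_combination (t₁ - t₂) * (t₁ - t₃) * (t₂ - t₃) * h - (t - t₂) * (t - t₃) * (t₂ - t₃) * h₁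
      + (t - t₁) * (t - t₃) * (t₁ - t₃) * h₂ - (t - t₁) * (t - t₂) * (t₁ - t₂) * h₃
  simpa [sub_eq_zero, h₁₂, h₁₃, h₂₃, or_assoc] using hV

theorem axisSextic_mul_self (a x : ℝ) : axisSextic a (a * x) = a ^ 6 * axisSextic 1 x := by
  unfold axisSextic; ring

theorem axisSextic_mul_self_eq_zero_iff {a : ℝ} (ha : a ≠ 0) (x : ℝ) :
    axisSextic a (a * x) = 0 ↔ axisSextic 1 x = 0 := by
  simp [axisSextic_mul_self, ha]

theorem axisSextic_one_eq_cubic (x : ℝ) :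
    axisSextic 1 x = (x ^ 2) ^ 3 + (-21) * (x ^ 2) ^ 2 + 35 * x ^ 2 + (-7) := by
  unfold axisSextic; ring

theorem continuous_axisSextic (a : ℝ) : Continuous (axisSextic a) := by
  unfold axisSextic; fun_prop

theorem exists_axisSextic_one_roots :
    ∃ s₁ ∈ Ioo (0.4815 : ℝ) 0.4816, ∃ s₂ ∈ Ioo (1.2539 : ℝ) 1.2540, ∃ s₃ ∈ Ioo (4.3812 : ℝ) 4.3813,
      axisSextic 1 s₁ = 0 ∧ axisSextic 1 s₂ = 0 ∧ axisSextic 1 s₃ = 0 ∧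
      ∀ x : ℝ, 0 < x → axisSextic 1 x = 0 → x = s₁ ∨ x = s₂ ∨ x = s₃ := by
  have hq := continuous_axisSextic 1
  obtain ⟨s₁, hs₁, hq₁⟩ := exists_mem_Ioo_eq_zero_of_mul_neg (by norm_num) hq.continuousOn
    (by norm_num [axisSextic] : axisSextic 1 0.4815 * axisSextic 1 0.4816 < 0)
  obtain ⟨s₂, hs₂, hq₂⟩ := exists_mem_Ioo_eq_zero_of_mul_neg (by norm_num) hq.continuousOn
    (by norm_num [axisSextic] : axisSextic 1 1.2539 * axisSextic 1 1.2540 < 0)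
  obtain ⟨s₃, hs₃, hq₃⟩ := exists_mem_Ioo_eq_zero_of_mul_neg (by norm_num) hq.continuousOn
    (by norm_num [axisSextic] : axisSextic 1 4.3812 * axisSextic 1 4.3813 < 0)
  refine ⟨s₁, hs₁, s₂, hs₂, s₃, hs₃, hq₁, hq₂, hq₃, fun x hx hqx => ?_⟩
  have hpos₁ : (0 : ℝ) ≤ s₁ := by linarith [hs₁.1]
  have hpos₂ : (0 : ℝ) ≤ s₂ := by linarith [hs₂.1]
  have hpos₃ : (0 : ℝ) ≤ s₃ := by linarith [hs₃.1]
  have h₁₂ : s₁ ^ 2 < s₂ ^ 2 := pow_lt_pow_left₀ (by linarith [hs₁.2, hs₂.1]) hpos₁ two_ne_zero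
  have h₂₃ : s₂ ^ 2 < s₃ ^ 2 := pow_lt_pow_left₀ (by linarith [hs₂.2, hs₃.1]) hpos₂ two_ne_zero
  rw [axisSextic_one_eq_cubic] at hq₁ hq₂ hq₃ hqx
  have hsq := eq_or_eq_or_eq_of_cubic_eq_zero h₁₂.ne (h₁₂.trans h₂₃).ne h₂₃.ne hq₁ hq₂ hq₃ hqx
  simpa only [pow_left_inj₀ hx.le hpos₁ two_ne_zero, pow_left_inj₀ hx.le hpos₂ two_ne_zero,
    pow_left_inj₀ hx.le hpos₃ two_ne_zero] using hsq

/-- For every `a > 0`, the sextic `p(r) = r⁶ − 21a²r⁴ + 35a⁴r² − 7a⁶`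
has exactly three positive real roots `r₁ < r₂ < r₃`, and they satisfy
`r₁ ∈ (0.4815·a, 0.4816·a)`, `r₂ ∈ (1.2539·a, 1.2540·a)`, `r₃ ∈ (4.3812·a, 4.3813·a)`. -/
theorem axisSextic_three_positive_roots (a : ℝ) (ha : 0 < a) :
    ∃ r₁ r₂ r₃ : ℝ, 0 < r₁ ∧ r₁ < r₂ ∧ r₂ < r₃ ∧
      axisSextic a r₁ = 0 ∧ axisSextic a r₂ = 0 ∧ axisSextic a r₃ = 0 ∧
      (∀ r : ℝ, 0 < r → axisSextic a r = 0 → r = r₁ ∨ r = r₂ ∨ r = r₃) ∧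
      (0.4815 * a < r₁ ∧ r₁ < 0.4816 * a) ∧
      (1.2539 * a < r₂ ∧ r₂ < 1.2540 * a) ∧
      (4.3812 * a < r₃ ∧ r₃ < 4.3813 * a) := by
  obtain ⟨s₁, ⟨hs₁l, hs₁r⟩, s₂, ⟨hs₂l, hs₂r⟩, s₃, ⟨hs₃l, hs₃r⟩, hq₁, hq₂, hq₃, honly⟩ :=
    exists_axisSextic_one_roots
  have hscale := axisSextic_mul_self_eq_zero_iff ha.ne'
  refine ⟨a * s₁, a * s₂, a * s₃, by positivity, by nlinarith, by nlinarith,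
    (hscale s₁).2 hq₁, (hscale s₂).2 hq₂, (hscale s₃).2 hq₃, fun r hr hpr => ?_,
    by constructor <;> nlinarith, by constructor <;> nlinarith, by constructor <;> nlinarith⟩
  have hr_eq : r = a * (r / a) := (mul_div_cancel₀ r ha.ne').symm
  rw [hr_eq] at hpr ⊢
  rcases honly (r / a) (div_pos hr ha) ((hscale _).1 hpr) with h | h | h <;> simp [h]
end
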